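/- The Ackermann hierarchy is pointwise monotone in its ordinal index: for all ordinals α, β with 0 < β < ε₀ and 0 < α < ε₀, and all x ∈ ℕ, if β ≺_x α then A_α(x) ≥ A_β(x). -/

import Mathlib

/-!
Call `A_δ` *expansive* if it is monotone, `A_δ(0) ≤ 1` and `y < A_δ(y)` for `y ≥ 1`.
Once every `δ < γ` is expansive, each step `β ≺_x γ` satisfies `A_β(x) ≤ A_γ(x)`:
for `γ = β + 1` because `x ≤ A_β^[x-1](1)` and `A_β` is monotone, and for a limit `γ`
with equality. Expansiveness itself is proved by well-founded induction; the only delicate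
point is monotonicity of `A_λ` at a limit `λ`, which follows from the step bound applied to
the Bachmann property `λ(n) ≺_n λ(n+1)` of the standard fundamental sequences.
-/

open ONote Ordinal

/-- The Ackermann hierarchy `A_α` (meaningful for `0 < α`): `A_1(x) = 2x`,
`A_{α+1}(x) = A_α^[x](1)`, `A_λ(x) = A_{λ(x)}(x)`. -/
def Ack : ONote → ℕ → ℕ
  | o =>
    match fundamentalSequence o, fundamentalSequence_has_prop o with
    | Sum.inl none, _ => fun _ => 0
    | Sum.inl (some a), hp =>
      have : a < o := by rw [lt_def, hp.1]; exact Order.lt_succ _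
      if a = 0 then fun x => 2 * x else fun x => (Ack a)^[x] 1
    | Sum.inr f, hp => fun i =>
      have : f i < o := (hp.2.1 i).2.1
      Ack (f i) i
  termination_by o => o

/-- One step of the pointwise ordering at `x`: `β ≺ α+1` when `β = α`, and `λ(x) ≺ λ` for a
limit `λ` (standard fundamental sequences). -/
def ptStep (x : ℕ) (β α : ONote) : Prop :=
  fundamentalSequence α = Sum.inl (some β) ∨
    ∃ f, fundamentalSequence α = Sum.inr f ∧ β = f x

/-- The pointwise ordering `β ≺_x α`: transitive closure of `ptStep x`. -/
def ptLt (x : ℕ) : ONote → ONote → Prop := Relation.TransGen (ptStep x)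

theorem Ack_def {o : ONote} {x} (e : fundamentalSequence o = x) :
    Ack o =
      match (motive := (x : Option ONote ⊕ (ℕ → ONote)) → FundamentalSequenceProp o x → ℕ → ℕ)
        x, e ▸ fundamentalSequence_has_prop o with
      | Sum.inl none, _ => fun _ => 0
      | Sum.inl (some a), _ => if a = 0 then fun x => 2 * x else fun x => (Ack a)^[x] 1
      | Sum.inr f, _ => fun i => Ack (f i) i := by
  subst x
  rw [Ack]

theorem Ack_zero : Ack 0 = fun _ => 0 := by
  rw [Ack_def (show fundamentalSequence 0 = Sum.inl none from rfl)]

theorem Ack_succ (o) {a} (h : fundamentalSequence o = Sum.inl (some a)) :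
    Ack o = if a = 0 then fun x => 2 * x else fun x => (Ack a)^[x] 1 := by
  rw [Ack_def h]

theorem Ack_limit (o) {f} (h : fundamentalSequence o = Sum.inr f) :
    Ack o = fun i => Ack (f i) i := by
  rw [Ack_def h]

theorem lt_of_fundamentalSequence_some {o a : ONote}
    (h : fundamentalSequence o = Sum.inl (some a)) : a < o := by
  have hp := fundamentalSequence_has_prop o
  rw [h] at hp
  rw [lt_def, hp.1]
  exact Order.lt_succ _

theorem lt_of_fundamentalSequence_limit {o : ONote} {f : ℕ → ONote}
    (h : fundamentalSequence o = Sum.inr f) (i : ℕ) : f i < o := by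
  have hp := fundamentalSequence_has_prop o
  rw [h] at hp
  exact (hp.2.1 i).2.1

theorem fundamentalSequence_oadd_of_some {a m b b'}
    (h : fundamentalSequence b = Sum.inl (some b')) :
    fundamentalSequence (oadd a m b) = Sum.inl (some (oadd a m b')) := by
  rw [fundamentalSequence, h]

theorem fundamentalSequence_oadd_of_limit {a m b g} (h : fundamentalSequence b = Sum.inr g) :
    fundamentalSequence (oadd a m b) = Sum.inr (fun i => oadd a m (g i)) := by
  rw [fundamentalSequence, h]

theorem fundamentalSequence_oadd_zero (a : ONote) (m : ℕ+) :
    fundamentalSequence (oadd a m 0) =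
      match fundamentalSequence a, m.natPred with
      | Sum.inl none, 0 => Sum.inl (some zero)
      | Sum.inl none, m + 1 => Sum.inl (some (oadd zero m.succPNat zero))
      | Sum.inl (some a'), 0 => Sum.inr fun i => oadd a' i.succPNat zero
      | Sum.inl (some a'), m + 1 => Sum.inr fun i => oadd a m.succPNat (oadd a' i.succPNat zero)
      | Sum.inr f, 0 => Sum.inr fun i => oadd (f i) 1 zero
      | Sum.inr f, m + 1 => Sum.inr fun i => oadd a m.succPNat (oadd (f i) 1 zero) := by
  rw [fundamentalSequence]
  rfl

theorem ne_zero_of_fundamentalSequence_limit {o : ONote} {f : ℕ → ONote}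
    (h : fundamentalSequence o = Sum.inr f) (i : ℕ) : f i ≠ 0 := by
  cases o with
  | zero => cases h
  | oadd a m b =>
    rw [fundamentalSequence] at h
    rcases e : fundamentalSequence b with (_ | b') | g <;> rw [e] at h
    · rcases e2 : fundamentalSequence a with (_ | a') | g2 <;> rw [e2] at h <;>
        rcases e3 : m.natPred with _ | m' <;> rw [e3] at h <;> cases h <;> nofun
    · cases h
    · cases h; nofun

namespace ptStep

variable {x : ℕ} {β γ : ONote}

theorem lt (h : ptStep x β γ) : β < γ := by
  rcases h with e | ⟨f, e, rfl⟩
  · exact lt_of_fundamentalSequence_some e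
  · exact lt_of_fundamentalSequence_limit e x

theorem oadd_tail (a m) (h : ptStep x β γ) : ptStep x (oadd a m β) (oadd a m γ) := by
  rcases h with h | ⟨g, h, rfl⟩
  · exact Or.inl (fundamentalSequence_oadd_of_some h)
  · exact Or.inr ⟨_, fundamentalSequence_oadd_of_limit h, rfl⟩

end ptStep

namespace ptLt

variable {x : ℕ} {β γ : ONote}

theorem oadd_tail (a m) (h : ptLt x β γ) : ptLt x (oadd a m β) (oadd a m γ) :=
  h.lift (oadd a m) fun _ _ => ptStep.oadd_tail a m

theorem zero_left : ∀ (o : ONote), o ≠ 0 → ptLt x 0 o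
  | o, ho => by
    rcases e : fundamentalSequence o with (_ | a) | f
    · have hp := fundamentalSequence_has_prop o
      rw [e] at hp
      exact absurd hp ho
    · have := lt_of_fundamentalSequence_some e
      by_cases h0 : a = 0
      · subst h0
        exact .single (Or.inl e)
      · exact (zero_left a h0).tail (Or.inl e)
    · have := lt_of_fundamentalSequence_limit e x
      exact (zero_left (f x) (ne_zero_of_fundamentalSequence_limit e x)).tail
        (Or.inr ⟨f, e, rfl⟩)
  termination_by o => o

theorem oadd_succ (a : ONote) (k : ℕ) :
    ptLt x (oadd a k.succPNat 0) (oadd a (k + 1).succPNat 0) := by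
  have hfs := fundamentalSequence_oadd_zero a (k + 1).succPNat
  rw [Nat.natPred_succPNat] at hfs
  rcases e : fundamentalSequence a with (_ | a') | g <;> rw [e] at hfs
  · have hp := fundamentalSequence_has_prop a
    rw [e] at hp
    subst hp
    exact .single (Or.inl hfs)
  all_goals exact .tail (oadd_tail a _ (zero_left _ (by nofun))) (Or.inr ⟨_, hfs, rfl⟩)

theorem oadd_one_le_oadd (a : ONote) (k : ℕ) :
    Relation.ReflTransGen (ptStep x) (oadd a 1 0) (oadd a k.succPNat 0) := by
  induction k with
  | zero => exact .refl
  | succ n ih => exact ih.trans (oadd_succ a n).to_reflTransGen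

theorem oadd_head_of_ptStep (h : ptStep x β γ) : ptLt x (oadd β 1 0) (oadd γ 1 0) := by
  have hfs := fundamentalSequence_oadd_zero γ 1
  rcases h with h | ⟨g, h, rfl⟩ <;> rw [h] at hfs
  · exact .tail' (oadd_one_le_oadd β x) (Or.inr ⟨_, hfs, rfl⟩)
  · exact .single (Or.inr ⟨_, hfs, rfl⟩)

theorem oadd_head (h : ptLt x β γ) : ptLt x (oadd β 1 0) (oadd γ 1 0) :=
  h.lift' (fun δ => oadd δ 1 0) fun _ _ => oadd_head_of_ptStep

end ptLt

theorem ptLt_fundamentalSequence_succ (x : ℕ) :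
    ∀ (o : ONote) {f}, fundamentalSequence o = Sum.inr f → ptLt x (f x) (f (x + 1)) := by
  intro o
  induction o with
  | zero => intro f h; cases h
  | oadd a m b iha ihb =>
    intro f h
    rw [fundamentalSequence] at h
    rcases e : fundamentalSequence b with (_ | b') | g <;> rw [e] at h
    · rcases e2 : fundamentalSequence a with (_ | a') | g2 <;> rw [e2] at h <;>
        rcases e3 : m.natPred with _ | m' <;> rw [e3] at h <;> cases h
      · exact ptLt.oadd_succ a' x
      · exact (ptLt.oadd_succ a' x).oadd_tail a m'.succPNat
      · exact (iha e2).oadd_head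
      · exact (iha e2).oadd_head.oadd_tail a m'.succPNat
    · cases h
    · cases h
      exact (ihb e).oadd_tail a m

structure AckExpansive (o : ONote) : Prop where
  monotone : Monotone (Ack o)
  apply_zero_le_one : Ack o 0 ≤ 1
  lt_apply : o ≠ 0 → ∀ y, 1 ≤ y → y < Ack o y

theorem lt_iterate_one {g : ℕ → ℕ} (hg : ∀ y, 1 ≤ y → y < g y) (k : ℕ) :
    k < g^[k] 1 := by
  induction k with
  | zero => exact Nat.one_pos
  | succ n ih =>
    rw [Function.iterate_succ_apply']
    exact Nat.lt_of_le_of_lt ih (hg _ (by omega))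

namespace AckExpansive

variable {a : ONote}

theorem apply_le_iterate (ha : AckExpansive a) (h0 : a ≠ 0) (x : ℕ) :
    Ack a x ≤ (Ack a)^[x] 1 := by
  cases x with
  | zero => exact ha.apply_zero_le_one
  | succ n =>
    rw [Function.iterate_succ_apply']
    exact ha.monotone (lt_iterate_one (ha.lt_apply h0) n)

theorem zero : AckExpansive 0 := by
  refine ⟨?_, ?_, fun h => absurd rfl h⟩ <;> rw [Ack_zero]
  exacts [fun _ _ _ => le_rfl, zero_le_one]

theorem of_succ {o : ONote} (e : fundamentalSequence o = Sum.inl (some a))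
    (ha : AckExpansive a) : AckExpansive o := by
  have hA := Ack_succ o e
  by_cases h0 : a = 0
  · rw [if_pos h0] at hA
    refine ⟨?_, ?_, fun _ y hy => ?_⟩ <;> rw [hA]
    exacts [fun u v h => Nat.mul_le_mul_left 2 h, Nat.zero_le 1, by dsimp only; omega]
  · rw [if_neg h0] at hA
    have hg := ha.lt_apply h0
    refine ⟨?_, ?_, fun _ y _ => ?_⟩ <;> rw [hA]
    exacts [ha.monotone.monotone_iterate_of_le_map (hg 1 le_rfl).le, le_rfl, lt_iterate_one hg y]

end AckExpansive

theorem ptStep.Ack_le {x : ℕ} {β γ : ONote} (H : ∀ δ < γ, AckExpansive δ)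
    (h : ptStep x β γ) : Ack β x ≤ Ack γ x := by
  rcases h with e | ⟨f, e, rfl⟩
  · rw [Ack_succ γ e]
    by_cases h0 : β = 0
    · subst h0
      simp [Ack_zero]
    · rw [if_neg h0]
      exact (H β (lt_of_fundamentalSequence_some e)).apply_le_iterate h0 x
  · rw [Ack_limit γ e]

theorem ptLt.Ack_le {x : ℕ} {β γ : ONote} (H : ∀ δ < γ, AckExpansive δ)
    (h : ptLt x β γ) : Ack β x ≤ Ack γ x := by
  induction h with
  | single h => exact h.Ack_le H
  | tail _ h ih =>
    exact (ih fun δ hδ => H δ (hδ.trans h.lt)).trans (h.Ack_le H)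

theorem AckExpansive.of_limit {o : ONote} {f : ℕ → ONote}
    (e : fundamentalSequence o = Sum.inr f) (H : ∀ δ < o, AckExpansive δ) : AckExpansive o := by
  have hf := lt_of_fundamentalSequence_limit e
  refine ⟨?_, ?_, fun _ y => ?_⟩ <;> rw [Ack_limit o e]
  · refine monotone_nat_of_le_succ fun n => ?_
    calc Ack (f n) n
        ≤ Ack (f (n + 1)) n :=
          (ptLt_fundamentalSequence_succ n o e).Ack_le fun δ hδ => H δ (hδ.trans (hf _))
      _ ≤ Ack (f (n + 1)) (n + 1) := (H _ (hf _)).monotone n.le_succ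
  · exact (H _ (hf 0)).apply_zero_le_one
  · exact (H _ (hf y)).lt_apply (ne_zero_of_fundamentalSequence_limit e y) y

theorem ackExpansive : ∀ o : ONote, AckExpansive o
  | o => by
    rcases e : fundamentalSequence o with (_ | a) | f
    · have hp := fundamentalSequence_has_prop o
      rw [e] at hp
      obtain rfl : o = 0 := hp
      exact .zero
    · have := lt_of_fundamentalSequence_some e
      exact .of_succ e (ackExpansive a)
    · exact .of_limit e fun δ _ => ackExpansive δ
  termination_by o => o

theorem ack_pointwise_mono_general (α β : ONote) (x : ℕ) (h : ptLt x β α) :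
    Ack β x ≤ Ack α x :=
  h.Ack_le fun δ _ => ackExpansive δ

/-- The Ackermann hierarchy is pointwise monotone in its ordinal index: for ordinals
`0 < β < ε₀` and `0 < α < ε₀` and all `x ∈ ℕ`, if `β ≺_x α` then `A_α(x) ≥ A_β(x)`. -/
theorem ack_pointwise_mono (α β : ONote) (hNFα : α.NF) (hNFβ : β.NF) (hα : 0 < α)
    (hβ : 0 < β) (x : ℕ) (h : ptLt x β α) :
    Ack β x ≤ Ack α x :=
  ack_pointwise_mono_general α β x h
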